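/- arXiv:1905.06891 — 4 statements merged into one kernel-verified Lean document; each statement's English description precedes it below -/
import Mathlib

section
/- Let n ≥ 2, let K ⊆ ℝⁿ be a proper subdual cone, let A ∈ ℝ^{n×n} be symmetric, and let {v¹, …, vⁿ} be an orthonormal system of eigenvectors of A with A vⁱ = λᵢ vⁱ and λ₁ < λ₂ ≤ ⋯ ≤ λₙ. If v¹ ∈ K*, then the sublevel set [φ_A ≤ c] = {x ∈ int(K) : ⟨Ax, x⟩ ≤ c‖x‖²} is convex for every c ∉ (λ₂, λₙ). -/
open scoped RealInnerProductSpace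

/-- The quadratic form `x ↦ ⟨A x, x⟩` associated with a matrix `A`. -/
noncomputable def quadForm {n : ℕ} (A : Matrix (Fin n) (Fin n) ℝ)
    (x : EuclideanSpace ℝ (Fin n)) : ℝ :=
  ⟪Matrix.toEuclideanLin A x, x⟫

/-- `K` is a cone: closed under multiplication by positive scalars. -/
def IsCone {n : ℕ} (K : Set (EuclideanSpace ℝ (Fin n))) : Prop :=
  ∀ ⦃t : ℝ⦄, 0 < t → ∀ ⦃x⦄, x ∈ K → t • x ∈ K

/-- A proper cone: a pointed closed convex cone with nonempty interior. -/
def IsProperCone {n : ℕ} (K : Set (EuclideanSpace ℝ (Fin n))) : Prop :=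
  IsCone K ∧ Convex ℝ K ∧ IsClosed K ∧ K ∩ (-K) ⊆ {0} ∧ (interior K).Nonempty

/-- The dual cone `K* = {u : ⟨u, y⟩ ≥ 0 for all y ∈ K}`. -/
def dualCone {n : ℕ} (K : Set (EuclideanSpace ℝ (Fin n))) : Set (EuclideanSpace ℝ (Fin n)) :=
  {u | ∀ y ∈ K, 0 ≤ ⟪u, y⟫}

/-- The sublevel set `[φ_A ≤ c] = {x ∈ int K : ⟨A x, x⟩ ≤ c ‖x‖²}`. -/
noncomputable def sublevel {n : ℕ} (A : Matrix (Fin n) (Fin n) ℝ)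
    (K : Set (EuclideanSpace ℝ (Fin n))) (c : ℝ) : Set (EuclideanSpace ℝ (Fin n)) :=
  {x ∈ interior K | quadForm A x ≤ c * ‖x‖ ^ 2}

/-!
In an orthonormal eigenbasis `⟨A x, x⟩ - c ‖x‖² = ∑ᵢ (λᵢ - c) ξᵢ²` with `ξᵢ = ⟨vᵢ, x⟩`.
For `c ≥ λₙ` all coefficients are nonpositive and the sublevel set is the whole of `int K`.
For `c ≤ λ₂` only `λ₁ - c` can be negative; since `v¹ ∈ K*` forces `ξ₁ ≥ 0` on `K`, the sublevel set
is `int K` cut with the ice-cream cone `∑_{i ≥ 2} (λᵢ - c) ξᵢ² ≤ (c - λ₁) ξ₁²`, `ξ₁ ≥ 0`, which is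
convex by the weighted Cauchy–Schwarz inequality.
-/

theorem Finset.sum_mul_mul_le_of_sum_mul_sq_le {ι : Type*} (s : Finset ι) {w f g : ι → ℝ}
    (hw : ∀ i ∈ s, 0 ≤ w i) {α p q : ℝ} (hp : 0 ≤ p) (hq : 0 ≤ q)
    (hf : ∑ i ∈ s, w i * f i ^ 2 ≤ α * p ^ 2) (hg : ∑ i ∈ s, w i * g i ^ 2 ≤ α * q ^ 2) :
    ∑ i ∈ s, w i * f i * g i ≤ α * p * q := by
  have hF : ∀ i ∈ s, 0 ≤ w i * f i ^ 2 := fun i hi => mul_nonneg (hw i hi) (sq_nonneg _)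
  have hG : ∀ i ∈ s, 0 ≤ w i * g i ^ 2 := fun i hi => mul_nonneg (hw i hi) (sq_nonneg _)
  have hαpq : 0 ≤ α * p * q := by
    rcases le_or_gt 0 α with hα | hα
    · positivity
    · have : p ^ 2 ≤ 0 := nonpos_of_mul_nonneg_right ((sum_nonneg hF).trans hf) hα
      obtain rfl : p = 0 := pow_eq_zero_iff two_ne_zero |>.1 (le_antisymm this (sq_nonneg p))
      simp
  refine le_of_sq_le_sq ?_ hαpq
  calc (∑ i ∈ s, w i * f i * g i) ^ 2
      ≤ (∑ i ∈ s, w i * f i ^ 2) * ∑ i ∈ s, w i * g i ^ 2 :=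
        sum_sq_le_sum_mul_sum_of_sq_le_mul s hF hG fun i _ => le_of_eq (by ring)
    _ ≤ (α * p ^ 2) * (α * q ^ 2) := mul_le_mul hf hg (sum_nonneg hG) ((sum_nonneg hF).trans hf)
    _ = (α * p * q) ^ 2 := by ring

theorem convex_setOf_sum_mul_sq_le {E ι : Type*} [AddCommGroup E] [Module ℝ E] (s : Finset ι)
    {w : ι → ℝ} (hw : ∀ i ∈ s, 0 ≤ w i) (f : ι → E →ₗ[ℝ] ℝ) (g : E →ₗ[ℝ] ℝ) (α : ℝ) :
    Convex ℝ {x | 0 ≤ g x ∧ ∑ i ∈ s, w i * f i x ^ 2 ≤ α * g x ^ 2} := by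
  rintro x ⟨hgx, hx⟩ y ⟨hgy, hy⟩ a b ha hb -
  have hxy := s.sum_mul_mul_le_of_sum_mul_sq_le hw hgx hgy hx hy
  simp only [Set.mem_ofPred_eq, map_add, map_smul, smul_eq_mul]
  refine ⟨by positivity, ?_⟩
  have hexpand : ∑ i ∈ s, w i * (a * f i x + b * f i y) ^ 2 = a ^ 2 * ∑ i ∈ s, w i * f i x ^ 2
      + 2 * a * b * ∑ i ∈ s, w i * f i x * f i y + b ^ 2 * ∑ i ∈ s, w i * f i y ^ 2 := by
    simp only [Finset.mul_sum, ← Finset.sum_add_distrib]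
    exact Finset.sum_congr rfl fun i _ => by ring
  rw [hexpand]
  nlinarith [mul_le_mul_of_nonneg_left hx (sq_nonneg a),
    mul_le_mul_of_nonneg_left hy (sq_nonneg b),
    mul_le_mul_of_nonneg_left hxy (by positivity : (0 : ℝ) ≤ 2 * a * b)]

theorem OrthonormalBasis.inner_apply_self_sub_mul_norm_sq {ι E : Type*} [Fintype ι]
    [NormedAddCommGroup E] [InnerProductSpace ℝ E] (b : OrthonormalBasis ι ℝ E)
    {T : E →ₗ[ℝ] E} {μ : ι → ℝ} (hT : ∀ i, T (b i) = μ i • b i) (c : ℝ) (x : E) :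
    ⟪T x, x⟫ - c * ‖x‖ ^ 2 = ∑ i, (μ i - c) * ⟪b i, x⟫ ^ 2 := by
  have hTx : T x = ∑ i, (⟪b i, x⟫ * μ i) • b i := by
    conv_lhs => rw [← b.sum_repr' x]
    simp only [map_sum, map_smul, hT, smul_smul]
  rw [← b.sum_sq_inner_right x, hTx, sum_inner, Finset.mul_sum, ← Finset.sum_sub_distrib]
  exact Finset.sum_congr rfl fun i _ => by rw [real_inner_smul_left]; ring

section Sublevel

variable {n : ℕ} {K : Set (EuclideanSpace ℝ (Fin n))} {A : Matrix (Fin n) (Fin n) ℝ}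
  {b : OrthonormalBasis (Fin n) ℝ (EuclideanSpace ℝ (Fin n))} {lam : Fin n → ℝ} {c : ℝ}

theorem mem_sublevel_iff (heig : ∀ i, Matrix.toEuclideanLin A (b i) = lam i • b i)
    {x : EuclideanSpace ℝ (Fin n)} :
    x ∈ sublevel A K c ↔ x ∈ interior K ∧ ∑ i, (lam i - c) * ⟪b i, x⟫ ^ 2 ≤ 0 := by
  rw [← b.inner_apply_self_sub_mul_norm_sq heig, sub_nonpos]
  rfl

theorem sublevel_eq_interior (heig : ∀ i, Matrix.toEuclideanLin A (b i) = lam i • b i)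
    (hc : ∀ i, lam i ≤ c) : sublevel A K c = interior K := by
  ext x
  rw [mem_sublevel_iff heig, and_iff_left_iff_imp]
  exact fun _ => Finset.sum_nonpos fun i _ =>
    mul_nonpos_of_nonpos_of_nonneg (sub_nonpos.2 (hc i)) (sq_nonneg _)

theorem convex_sublevel (heig : ∀ i, Matrix.toEuclideanLin A (b i) = lam i • b i)
    (hK : Convex ℝ K) {i₀ : Fin n} (hb : b i₀ ∈ dualCone K) (hc : ∀ i ≠ i₀, c ≤ lam i) :
    Convex ℝ (sublevel A K c) := by
  have hsplit : sublevel A K c = interior K ∩ {x | 0 ≤ innerₛₗ ℝ (b i₀) x ∧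
      ∑ i ∈ Finset.univ.erase i₀, (lam i - c) * innerₛₗ ℝ (b i) x ^ 2
        ≤ (c - lam i₀) * innerₛₗ ℝ (b i₀) x ^ 2} := by
    ext x
    simp only [mem_sublevel_iff heig, innerₛₗ_apply_apply, Set.mem_inter_iff, Set.mem_ofPred_eq,
      ← Finset.add_sum_erase _ _ (Finset.mem_univ i₀)]
    constructor
    · rintro ⟨hx, hq⟩
      exact ⟨hx, hb x (interior_subset hx), by linarith⟩
    · rintro ⟨hx, -, hq⟩
      exact ⟨hx, by linarith⟩
  rw [hsplit]
  exact hK.interior.inter <| convex_setOf_sum_mul_sq_le _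
    (fun i hi => sub_nonneg.2 (hc i (Finset.ne_of_mem_erase hi))) _ _ _

end Sublevel

/-- If `v¹ ∈ K*`, then the sublevel set `[φ_A ≤ c]` is convex for every `c ∉ (λ₂, λₙ)`. -/
theorem stmt6 (n : ℕ) [NeZero n] (hn : 2 ≤ n)
    (K : Set (EuclideanSpace ℝ (Fin n))) (hK : IsProperCone K)
    (A : Matrix (Fin n) (Fin n) ℝ)
    (v : Fin n → EuclideanSpace ℝ (Fin n)) (hv : Orthonormal ℝ v)
    (lam : Fin n → ℝ) (heig : ∀ i, Matrix.toEuclideanLin A (v i) = lam i • v i)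
    (hmono : Monotone lam)
    (hv1 : v 0 ∈ dualCone K) :
    ∀ c : ℝ, c ∉ Set.Ioo (lam 1) (lam ⟨n - 1, by omega⟩) → Convex ℝ (sublevel A K c) := by
  intro c hc
  obtain ⟨-, hKconv, -⟩ := hK
  obtain ⟨b, rfl⟩ : ∃ b : OrthonormalBasis (Fin n) ℝ (EuclideanSpace ℝ (Fin n)), ⇑b = v :=
    ⟨.mk hv (hv.linearIndependent.span_eq_top_of_card_eq_finrank (by simp)).ge, by simp⟩
  rcases le_or_gt c (lam 1) with hc₁ | hc₁
  · exact convex_sublevel heig hKconv hv1 fun i hi => hc₁.trans (hmono (Fin.one_le_of_ne_zero hi))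
  · have hcₙ : lam ⟨n - 1, by omega⟩ ≤ c := not_lt.1 fun h => hc ⟨hc₁, h⟩
    have hle : ∀ i, lam i ≤ c := fun i =>
      (hmono (Fin.le_iff_val_le_val.2 (Nat.le_sub_one_of_lt i.isLt))).trans hcₙ
    rw [sublevel_eq_interior heig hle]
    exact hKconv.interior
end

section
/- Let n ≥ 3, let K ⊆ ℝⁿ be a proper subdual cone, let A ∈ ℝ^{n×n} be symmetric, and let {v¹, …, vⁿ} be an orthonormal system of eigenvectors of A with A vⁱ = λᵢ vⁱ and λ₁ < λ₂ ≤ ⋯ ≤ λₙ. Set θᵢ = (λᵢ − λ₂)/(λ₂ − λ₁) for i = 2, …, n and L_{λ₂} = {x ∈ ℝⁿ : ⟨v¹, x⟩ ≥ √(θ₂⟨v², x⟩² + ⋯ + θₙ⟨vⁿ, x⟩²)}. Suppose λ₂ ≤ (λ₁ + λ₃)/2. If K ∩ (−L_{λ₂}) = {0} or K ∩ L_{λ₂} = {0}, then the sublevel set [φ_A ≤ c] = {x ∈ int(K) : ⟨Ax, x⟩ ≤ c‖x‖²} is convex for every c ∉ (λ₂, λₙ). -/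
open scoped RealInnerProductSpace

/-- The elliptic cone `L = {x : √(∑_{i≥2} θᵢ ⟨vⁱ, x⟩²) ≤ ⟨v¹, x⟩}`. -/
noncomputable def ellipCone {n : ℕ} [NeZero n]
    (v : Fin n → EuclideanSpace ℝ (Fin n)) (θ : Fin n → ℝ) :
    Set (EuclideanSpace ℝ (Fin n)) :=
  {x | Real.sqrt (∑ i ∈ Finset.univ.erase 0, θ i * ⟪v i, x⟫ ^ 2) ≤ ⟪v 0, x⟫}

/-!
In an orthonormal eigenbasis `v` of `A` (indexed from `0`, so `λ₁` is `lam 0`), with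
`ξᵢ = ⟨vⁱ, x⟩`, one has `⟨Ax, x⟩ - c‖x‖² = ∑ᵢ (λᵢ - c) ξᵢ²`. For `c ≥ λₙ` this is never positive,
so the sublevel set is all of `int K`; for `c ≤ λ₁` it is a positive semidefinite form, whose zero
set is a subspace. For `λ₁ < c ≤ λ₂` the sublevel set of the form is the double cone
`L_c ∪ -L_c`, where `L_c` is the second-order cone built like `L_{λ₂}` from the weights
`(λᵢ - c)/(c - λ₁) ≥ θᵢ`. Hence `L_c ⊆ L_{λ₂}`, so a cone `K` meeting `-L_{λ₂}` (resp. `L_{λ₂}`)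
only at `0` sees a single nappe, and `int K ∩ L_c` (resp. `int K ∩ -L_c`) is convex.
-/

theorem convex_setOf_norm_le_of_linear {E F : Type*} [AddCommGroup E] [Module ℝ E]
    [SeminormedAddCommGroup F] [NormedSpace ℝ F] (f : E →ₗ[ℝ] F) (g : E →ₗ[ℝ] ℝ) :
    Convex ℝ {x | ‖f x‖ ≤ g x} := by
  simpa [sub_nonpos] using
    (((convexOn_norm convex_univ).comp_linearMap f).sub (g.concaveOn convex_univ)).convex_le 0

theorem convex_setOf_sqrt_sum_mul_sq_inner_le_inner {ι E : Type*} [NormedAddCommGroup E]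
    [InnerProductSpace ℝ E] (s : Finset ι) (a : ι → ℝ) (ha : ∀ i ∈ s, 0 ≤ a i) (u : ι → E)
    (w : E) : Convex ℝ {x | √(∑ i ∈ s, a i * ⟪u i, x⟫ ^ 2) ≤ ⟪w, x⟫} := by
  let f : E →ₗ[ℝ] EuclideanSpace ℝ s :=
    (WithLp.linearEquiv 2 ℝ (s → ℝ)).symm.toLinearMap ∘ₗ
      LinearMap.pi fun i : s => √(a i) • innerₛₗ ℝ (u i)
  convert convex_setOf_norm_le_of_linear f (innerₛₗ ℝ w) using 3 with x
  rw [← Finset.sum_attach s]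
  simp [f, EuclideanSpace.norm_eq, mul_pow, Real.sq_sqrt (ha _ (Subtype.prop _))]

theorem convex_setOf_sum_mul_sq_inner_nonpos {ι E : Type*} [Fintype ι] [NormedAddCommGroup E]
    [InnerProductSpace ℝ E] (a : ι → ℝ) (ha : ∀ i, 0 ≤ a i) (u : ι → E) :
    Convex ℝ {x | ∑ i, a i * ⟪u i, x⟫ ^ 2 ≤ 0} := by
  simpa [Real.sqrt_le_left le_rfl] using
    convex_setOf_sqrt_sum_mul_sq_inner_le_inner Finset.univ a (fun i _ => ha i) u 0

theorem inner_apply_self_eq_sum_of_apply_eq_smul {ι E : Type*} [Fintype ι] [NormedAddCommGroup E]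
    [InnerProductSpace ℝ E] (b : OrthonormalBasis ι ℝ E) (T : E →ₗ[ℝ] E) (μ : ι → ℝ)
    (hT : ∀ i, T (b i) = μ i • b i) (x : E) :
    ⟪T x, x⟫ = ∑ i, μ i * ⟪b i, x⟫ ^ 2 := by
  have hTx : T x = ∑ i, (μ i * ⟪b i, x⟫) • b i := by
    conv_lhs => rw [← b.sum_repr' x]
    simp only [map_sum, map_smul, hT, smul_smul, mul_comm]
  rw [hTx, sum_inner]
  simp only [real_inner_smul_left, sq, mul_assoc]

theorem Set.inter_union_eq_inter_of_inter_subset_singleton {α : Type*} {S C D : Set α} {a : α}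
    (hSD : S ∩ D ⊆ {a}) (ha : a ∈ C) : S ∩ (C ∪ D) = S ∩ C := by
  rw [Set.inter_union_distrib_left, Set.union_eq_left]
  exact fun x hx => ⟨hx.1, Set.mem_singleton_iff.1 (hSD hx) ▸ ha⟩

theorem sub_div_sub_le_sub_div_sub {a b c d : ℝ} (hac : a < c) (hcb : c ≤ b) (hbd : b ≤ d) :
    (d - b) / (b - a) ≤ (d - c) / (c - a) := by
  rw [div_le_div_iff₀ (by linarith) (by linarith)]
  nlinarith [mul_nonneg (sub_nonneg.2 (hac.le.trans (hcb.trans hbd))) (sub_nonneg.2 hcb)]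

section Spectral

variable {n : ℕ} {A : Matrix (Fin n) (Fin n) ℝ} {v : Fin n → EuclideanSpace ℝ (Fin n)}
  {lam : Fin n → ℝ}

theorem quadForm_sub_mul_norm_sq (hv : Orthonormal ℝ v)
    (heig : ∀ i, Matrix.toEuclideanLin A (v i) = lam i • v i) (c : ℝ)
    (x : EuclideanSpace ℝ (Fin n)) :
    quadForm A x - c * ‖x‖ ^ 2 = ∑ i, (lam i - c) * ⟪v i, x⟫ ^ 2 := by
  let b := OrthonormalBasis.mk hv
    (hv.linearIndependent.span_eq_top_of_card_eq_finrank' (by simp)).ge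
  have hb : ⇑b = v := OrthonormalBasis.coe_mk hv _
  rw [quadForm, ← b.sum_sq_inner_right, inner_apply_self_eq_sum_of_apply_eq_smul b _ lam
    (by simpa [hb] using heig), Finset.mul_sum, ← Finset.sum_sub_distrib, hb]
  simp only [sub_mul]

theorem sublevel_eq_inter (hv : Orthonormal ℝ v)
    (heig : ∀ i, Matrix.toEuclideanLin A (v i) = lam i • v i) (K : Set (EuclideanSpace ℝ (Fin n)))
    (c : ℝ) : sublevel A K c = interior K ∩ {x | ∑ i, (lam i - c) * ⟪v i, x⟫ ^ 2 ≤ 0} := by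
  ext x
  simp only [sublevel, Set.mem_inter_iff, Set.mem_ofPred_eq,
    ← quadForm_sub_mul_norm_sq hv heig, sub_nonpos]

end Spectral

section EllipCone

variable {n : ℕ} [NeZero n] {v : Fin n → EuclideanSpace ℝ (Fin n)}

theorem zero_mem_ellipCone (θ : Fin n → ℝ) : (0 : EuclideanSpace ℝ (Fin n)) ∈ ellipCone v θ := by
  simp [ellipCone]

theorem convex_ellipCone {θ : Fin n → ℝ} (hθ : ∀ i ≠ 0, 0 ≤ θ i) : Convex ℝ (ellipCone v θ) :=
  convex_setOf_sqrt_sum_mul_sq_inner_le_inner _ θ (fun i hi => hθ i (Finset.ne_of_mem_erase hi))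
    v (v 0)

theorem ellipCone_subset_ellipCone {θ θ' : Fin n → ℝ} (h : ∀ i ≠ 0, θ i ≤ θ' i) :
    ellipCone v θ' ⊆ ellipCone v θ := fun _ hx =>
  (Real.sqrt_le_sqrt (Finset.sum_le_sum fun i hi =>
    mul_le_mul_of_nonneg_right (h i (Finset.ne_of_mem_erase hi)) (sq_nonneg _))).trans hx

theorem setOf_sum_nonpos_eq_ellipCone_union_neg {lam : Fin n → ℝ} {c : ℝ} (hc : lam 0 < c) :
    {x | ∑ i, (lam i - c) * ⟪v i, x⟫ ^ 2 ≤ 0} =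
      ellipCone v (fun i => (lam i - c) / (c - lam 0)) ∪
        -ellipCone v (fun i => (lam i - c) / (c - lam 0)) := by
  ext x
  have hsplit := Finset.add_sum_erase Finset.univ
    (fun i => (lam i - c) * ⟪v i, x⟫ ^ 2) (Finset.mem_univ 0)
  have hdiv : ∑ i ∈ Finset.univ.erase 0, (lam i - c) / (c - lam 0) * ⟪v i, x⟫ ^ 2 =
      (∑ i ∈ Finset.univ.erase 0, (lam i - c) * ⟪v i, x⟫ ^ 2) / (c - lam 0) := by
    rw [Finset.sum_div]
    exact Finset.sum_congr rfl fun i _ => by ring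
  simp only [ellipCone, Set.mem_ofPred_eq, Set.mem_union, Set.mem_neg, inner_neg_right, neg_sq]
  rw [← le_abs, ← Real.sqrt_sq_eq_abs, Real.sqrt_le_sqrt_iff (sq_nonneg _), hdiv,
    div_le_iff₀ (sub_pos.2 hc)]
  constructor <;> intro h <;> linarith

end EllipCone

/-- Corollary 3 of the paper: if `λ₂ ≤ (λ₁ + λ₃)/2` and `K ∩ (-L_{λ₂}) = {0}` or
`K ∩ L_{λ₂} = {0}`, then `[φ_A ≤ c]` is convex for all `c ∉ (λ₂, λₙ)`. -/
theorem stmt7 (n : ℕ) [NeZero n] (hn : 3 ≤ n)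
    (K : Set (EuclideanSpace ℝ (Fin n))) (hK : IsProperCone K)
    (A : Matrix (Fin n) (Fin n) ℝ)
    (v : Fin n → EuclideanSpace ℝ (Fin n)) (hv : Orthonormal ℝ v)
    (lam : Fin n → ℝ) (heig : ∀ i, Matrix.toEuclideanLin A (v i) = lam i • v i)
    (hmono : Monotone lam) :
    let L := ellipCone v (fun i => (lam i - lam 1) / (lam 1 - lam 0))
    (K ∩ -L = {0} ∨ K ∩ L = {0}) →
      ∀ c : ℝ, c ∉ Set.Ioo (lam 1) (lam ⟨n - 1, by omega⟩) → Convex ℝ (sublevel A K c) := by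
  intro L hKL c hc
  have hKconv : Convex ℝ (interior K) := hK.2.1.interior
  rw [sublevel_eq_inter hv heig]
  rcases le_or_gt c (lam 1) with hc1 | hc1
  · rcases le_or_gt c (lam 0) with hc0 | hc0
    · exact hKconv.inter <| convex_setOf_sum_mul_sq_inner_nonpos _
        (fun i => sub_nonneg.2 (hc0.trans (hmono (Fin.zero_le i)))) v
    rw [setOf_sum_nonpos_eq_ellipCone_union_neg hc0]
    set C := ellipCone v (fun i => (lam i - c) / (c - lam 0))
    have hC : Convex ℝ C := convex_ellipCone fun i hi =>
      div_nonneg (sub_nonneg.2 (hc1.trans (hmono (Fin.one_le_of_ne_zero hi)))) (sub_pos.2 hc0).le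
    have hCL : C ⊆ L := ellipCone_subset_ellipCone fun i hi =>
      sub_div_sub_le_sub_div_sub hc0 hc1 (hmono (Fin.one_le_of_ne_zero hi))
    rcases hKL with hKL | hKL
    · rw [Set.inter_union_eq_inter_of_inter_subset_singleton
        ((Set.inter_subset_inter interior_subset (Set.neg_subset_neg.2 hCL)).trans hKL.subset)
        (zero_mem_ellipCone _)]
      exact hKconv.inter hC
    · rw [Set.union_comm, Set.inter_union_eq_inter_of_inter_subset_singleton
        ((Set.inter_subset_inter interior_subset hCL).trans hKL.subset)
        (by simpa using zero_mem_ellipCone _)]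
      exact hKconv.inter hC.neg
  · have hlast : lam ⟨n - 1, by omega⟩ ≤ c := not_lt.1 fun h => hc ⟨hc1, h⟩
    have hall : {x | ∑ i, (lam i - c) * ⟪v i, x⟫ ^ 2 ≤ 0} = Set.univ :=
      Set.eq_univ_of_forall fun x => Finset.sum_nonpos fun i _ => mul_nonpos_of_nonpos_of_nonneg
        (sub_nonpos.2 ((hmono (Fin.mk_le_mk.2 (by omega))).trans hlast)) (sq_nonneg _)
    rw [hall, Set.inter_univ]
    exact hKconv
end

section
/- Let n ≥ 3, let K ⊆ ℝⁿ be a proper subdual cone, and let A ∈ ℝ^{n×n} be a symmetric nonsingular matrix with eigenvalues λ₁ ≤ λ₂ ≤ ⋯ ≤ λₙ (counted with multiplicity, with a corresponding orthonormal system of eigenvectors). Suppose that the function x ↦ ⟨Ax, x⟩ is not constant on S^{n−1} ∩ K, and that the sublevel set [φ_A ≤ c] = {x ∈ int(K) : ⟨Ax, x⟩ ≤ c‖x‖²} is convex for every c ∈ ℝ (the paper's characterization of q_A(x) = ⟨Ax, x⟩ being spherically quasi-convex). Then: (i) λ₁ < λ₂; and (ii) either λ₂ ≤ ⟨Ax,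 x⟩ for all x ∈ S^{n−1} ∩ K, or ⟨Ax, x⟩ ≤ λ₂ for all x ∈ S^{n−1} ∩ K. -/
open scoped RealInnerProductSpace

/-! Let `y ∈ int K`, `r = φ_A(y)`, and let `u` be orthogonal to `A y - r y`. Along `t ↦ y + t u`
the function `q_A - r ‖·‖²` equals `t² (q_A(u) - r ‖u‖²)`. If this were negative, both points
`y ± ε u` would lie in a sublevel set `[φ_A ≤ c]` with `c < r`, and by convexity so would their
midpoint `y`, which is absurd; hence `r ‖u‖² ≤ q_A(u)`. The plane spanned by the eigenvectors of
`λ₁` and `λ₂` contains such a `u ≠ 0`, on which `q_A ≤ λ₂ ‖·‖²`. So `φ_A ≤ λ₂` on `int K`, and on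
`K` by continuity. As `φ_A ≥ λ₁` everywhere, `λ₁ = λ₂` would make `q_A` constant on
`S^{n-1} ∩ K`. -/

section

variable {n : ℕ} {A : Matrix (Fin n) (Fin n) ℝ}

lemma Matrix.IsSymm.isSymmetric_toEuclideanLin (hA : A.IsSymm) :
    (Matrix.toEuclideanLin A).IsSymmetric :=
  Matrix.isSymmetric_toEuclideanLin_iff.mpr (Matrix.isHermitian_iff_isSymm.mpr hA)

lemma quadForm_zero : quadForm A 0 = 0 := by
  simp [quadForm]

lemma continuous_quadForm : Continuous (quadForm A) :=
  (Matrix.toEuclideanLin A).continuous_of_finiteDimensional.inner continuous_id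

lemma quadForm_add_smul (hA : A.IsSymm) (y u : EuclideanSpace ℝ (Fin n)) (c : ℝ) :
    quadForm A (y + c • u) =
      quadForm A y + 2 * c * ⟪Matrix.toEuclideanLin A y, u⟫ + c ^ 2 * quadForm A u := by
  have hsymm : ⟪Matrix.toEuclideanLin A u, y⟫ = ⟪Matrix.toEuclideanLin A y, u⟫ :=
    (hA.isSymmetric_toEuclideanLin u y).trans (real_inner_comm _ _)
  simp only [quadForm, map_add, map_smul, inner_add_left, inner_add_right,
    real_inner_smul_left, real_inner_smul_right, hsymm]
  ring

lemma quadForm_add_smul_sub_mul_norm_sq (hA : A.IsSymm) {y u : EuclideanSpace ℝ (Fin n)}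
    {r : ℝ} (hTy : ⟪Matrix.toEuclideanLin A y, u⟫ = r * ⟪y, u⟫)
    (hqy : quadForm A y = r * ‖y‖ ^ 2) (c : ℝ) :
    quadForm A (y + c • u) - r * ‖y + c • u‖ ^ 2 = c ^ 2 * (quadForm A u - r * ‖u‖ ^ 2) := by
  rw [quadForm_add_smul hA, hTy, hqy, norm_add_sq_real, real_inner_smul_right, norm_smul,
    Real.norm_eq_abs, mul_pow, sq_abs]
  ring

section Sublevel

variable {K : Set (EuclideanSpace ℝ (Fin n))}

lemma sublevel_mono {c c' : ℝ} (h : c ≤ c') : sublevel A K c ⊆ sublevel A K c' :=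
  fun _ hx => ⟨hx.1, hx.2.trans (mul_le_mul_of_nonneg_right h (sq_nonneg _))⟩

lemma exists_lt_mem_sublevel {r : ℝ} {z : EuclideanSpace ℝ (Fin n)} (hz : z ∈ interior K)
    (hq : quadForm A z < r * ‖z‖ ^ 2) : ∃ c < r, z ∈ sublevel A K c := by
  have hz0 : z ≠ 0 := by
    rintro rfl
    simp [quadForm_zero] at hq
  have hnorm : 0 < ‖z‖ ^ 2 := by positivity
  exact ⟨quadForm A z / ‖z‖ ^ 2, (div_lt_iff₀ hnorm).mpr hq, hz,
    (div_mul_cancel₀ _ hnorm.ne').ge⟩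

lemma exists_lt_combo_mem_sublevel (hconv : ∀ c : ℝ, Convex ℝ (sublevel A K c)) {r : ℝ}
    {z₁ z₂ : EuclideanSpace ℝ (Fin n)} (hz₁ : z₁ ∈ interior K) (hz₂ : z₂ ∈ interior K)
    (hq₁ : quadForm A z₁ < r * ‖z₁‖ ^ 2) (hq₂ : quadForm A z₂ < r * ‖z₂‖ ^ 2)
    {a b : ℝ} (ha : 0 ≤ a) (hb : 0 ≤ b) (hab : a + b = 1) :
    ∃ c < r, a • z₁ + b • z₂ ∈ sublevel A K c := by
  obtain ⟨c₁, hc₁, h₁⟩ := exists_lt_mem_sublevel hz₁ hq₁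
  obtain ⟨c₂, hc₂, h₂⟩ := exists_lt_mem_sublevel hz₂ hq₂
  exact ⟨max c₁ c₂, max_lt hc₁ hc₂, hconv _ (sublevel_mono (le_max_left _ _) h₁)
    (sublevel_mono (le_max_right _ _) h₂) ha hb hab⟩

lemma mul_norm_sq_le_quadForm_of_convex_sublevel (hA : A.IsSymm)
    (hconv : ∀ c : ℝ, Convex ℝ (sublevel A K c)) {y u : EuclideanSpace ℝ (Fin n)} {r : ℝ}
    (hy : y ∈ interior K) (hy0 : y ≠ 0) (hTy : ⟪Matrix.toEuclideanLin A y, u⟫ = r * ⟪y, u⟫)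
    (hqy : quadForm A y = r * ‖y‖ ^ 2) :
    r * ‖u‖ ^ 2 ≤ quadForm A u := by
  by_contra! hu
  obtain ⟨ε, hε, hball⟩ : ∃ ε > 0, ∀ c : ℝ, dist c 0 < ε → y + c • u ∈ interior K :=
    Metric.isOpen_iff.mp (isOpen_interior.preimage (by fun_prop)) 0 (by simpa using hy)
  have hmem (c : ℝ) (hc : |c| < ε) : y + c • u ∈ interior K :=
    hball c (by simpa using hc)
  have hlt (c : ℝ) (hc : c ≠ 0) : quadForm A (y + c • u) < r * ‖y + c • u‖ ^ 2 := by
    have hc2 : 0 < c ^ 2 := by positivity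
    nlinarith [quadForm_add_smul_sub_mul_norm_sq hA hTy hqy c]
  have hε2 : |ε / 2| < ε := by rw [abs_of_pos (by positivity)]; linarith
  obtain ⟨c, hcr, hc⟩ := exists_lt_combo_mem_sublevel hconv
    (hmem (ε / 2) hε2) (hmem (-(ε / 2)) (by rwa [abs_neg]))
    (hlt _ (by positivity)) (hlt _ (by simp [hε.ne'])) (a := 1 / 2) (b := 1 / 2)
    (by norm_num) (by norm_num) (by norm_num)
  have hmid : (1 / 2 : ℝ) • (y + (ε / 2) • u) + (1 / 2 : ℝ) • (y + (-(ε / 2)) • u) = y := by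
    module
  rw [hmid] at hc
  have hy2 : 0 < ‖y‖ ^ 2 := by positivity
  nlinarith [hc.2]

lemma quadForm_le_of_forall_mem_interior (hK : Convex ℝ K) (hKi : (interior K).Nonempty)
    {c : ℝ} (h : ∀ y ∈ interior K, quadForm A y ≤ c * ‖y‖ ^ 2) {x : EuclideanSpace ℝ (Fin n)}
    (hx : x ∈ K) :
    quadForm A x ≤ c * ‖x‖ ^ 2 := by
  have hcl : IsClosed {z : EuclideanSpace ℝ (Fin n) | quadForm A z ≤ c * ‖z‖ ^ 2} :=
    isClosed_le continuous_quadForm (by fun_prop)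
  have hsub := hcl.closure_subset_iff.mpr h
  rw [hK.closure_interior_eq_closure_of_nonempty_interior hKi] at hsub
  exact hsub (subset_closure hx)

end Sublevel

section Eigenbasis

variable {ι : Type*} {v : ι → EuclideanSpace ℝ (Fin n)} {lam : ι → ℝ}

lemma quadForm_smul_add_smul_le (hv : Orthonormal ℝ v)
    (heig : ∀ i, Matrix.toEuclideanLin A (v i) = lam i • v i) {i j : ι} (hij : i ≠ j)
    (hle : lam i ≤ lam j) (α γ : ℝ) :
    quadForm A (α • v i + γ • v j) ≤ lam j * ‖α • v i + γ • v j‖ ^ 2 := by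
  have hii : ⟪v i, v i⟫ = 1 := by rw [real_inner_self_eq_norm_sq, hv.1 i, one_pow]
  have hjj : ⟪v j, v j⟫ = 1 := by rw [real_inner_self_eq_norm_sq, hv.1 j, one_pow]
  have hij' : ⟪v i, v j⟫ = 0 := hv.2 hij
  have hji : ⟪v j, v i⟫ = 0 := hv.2 hij.symm
  rw [quadForm, ← real_inner_self_eq_norm_sq]
  simp only [map_add, map_smul, heig, inner_add_left, inner_add_right, real_inner_smul_left,
    real_inner_smul_right, hii, hjj, hij', hji]
  nlinarith [mul_le_mul_of_nonneg_right hle (sq_nonneg α)]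

lemma exists_ne_zero_inner_eq_zero_quadForm_le (hv : Orthonormal ℝ v)
    (heig : ∀ i, Matrix.toEuclideanLin A (v i) = lam i • v i) {i j : ι} (hij : i ≠ j)
    (hle : lam i ≤ lam j) (w : EuclideanSpace ℝ (Fin n)) :
    ∃ u ≠ 0, ⟪w, u⟫ = 0 ∧ quadForm A u ≤ lam j * ‖u‖ ^ 2 := by
  by_cases hwi : ⟪w, v i⟫ = 0
  · refine ⟨1 • v i + 0 • v j, by simpa using hv.ne_zero i, by simpa using hwi,
      quadForm_smul_add_smul_le hv heig hij hle _ _⟩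
  · refine ⟨⟪w, v j⟫ • v i + (-⟪w, v i⟫) • v j, fun h => hwi ?_, ?_,
      quadForm_smul_add_smul_le hv heig hij hle _ _⟩
    · have h' := congrArg (⟪·, v j⟫) h
      simp only [inner_add_left, real_inner_smul_left, hv.2 hij, real_inner_self_eq_norm_sq,
        hv.1 j, inner_zero_left] at h'
      linarith
    · simp only [inner_add_right, real_inner_smul_right]
      ring

lemma quadForm_le_of_mem_interior {K : Set (EuclideanSpace ℝ (Fin n))} (hA : A.IsSymm)
    (hconv : ∀ c : ℝ, Convex ℝ (sublevel A K c)) (hv : Orthonormal ℝ v)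
    (heig : ∀ i, Matrix.toEuclideanLin A (v i) = lam i • v i) {i j : ι} (hij : i ≠ j)
    (hle : lam i ≤ lam j) {y : EuclideanSpace ℝ (Fin n)} (hy : y ∈ interior K) :
    quadForm A y ≤ lam j * ‖y‖ ^ 2 := by
  rcases eq_or_ne y 0 with rfl | hy0
  · simp [quadForm_zero]
  set r := quadForm A y / ‖y‖ ^ 2
  have hy2 : 0 < ‖y‖ ^ 2 := by positivity
  have hqy : quadForm A y = r * ‖y‖ ^ 2 := (div_mul_cancel₀ _ hy2.ne').symm
  obtain ⟨u, hu0, hwu, hqu⟩ := exists_ne_zero_inner_eq_zero_quadForm_le hv heig hij hle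
    (Matrix.toEuclideanLin A y - r • y)
  have hTy : ⟪Matrix.toEuclideanLin A y, u⟫ = r * ⟪y, u⟫ := by
    rw [inner_sub_left, real_inner_smul_left] at hwu
    linarith
  have hr : r ≤ lam j := le_of_mul_le_mul_right
    ((mul_norm_sq_le_quadForm_of_convex_sublevel hA hconv hy hy0 hTy hqy).trans hqu)
    (by positivity)
  rw [hqy]
  exact mul_le_mul_of_nonneg_right hr hy2.le

lemma mul_norm_sq_le_quadForm [Fintype ι] (hA : A.IsSymm) (hv : Orthonormal ℝ v)
    (hcard : Fintype.card ι = n) (heig : ∀ i, Matrix.toEuclideanLin A (v i) = lam i • v i)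
    {μ : ℝ} (hμ : ∀ i, μ ≤ lam i) (x : EuclideanSpace ℝ (Fin n)) :
    μ * ‖x‖ ^ 2 ≤ quadForm A x := by
  have hspan : ⊤ ≤ Submodule.span ℝ (Set.range v) :=
    (hv.linearIndependent.span_eq_top_of_card_eq_finrank' (by simpa using hcard)).ge
  set b := OrthonormalBasis.mk hv hspan
  have hbv : ⇑b = v := OrthonormalBasis.coe_mk hv hspan
  have hcoord (i : ι) : ⟪Matrix.toEuclideanLin A x, b i⟫ = lam i * ⟪b i, x⟫ := by
    rw [hbv, hA.isSymmetric_toEuclideanLin, heig, real_inner_smul_right, real_inner_comm]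
  rw [← b.sum_sq_inner_right, quadForm, ← b.sum_inner_mul_inner, Finset.mul_sum]
  refine Finset.sum_le_sum fun i _ => ?_
  rw [hcoord, mul_assoc, ← sq]
  exact mul_le_mul_of_nonneg_right (hμ i) (sq_nonneg _)

end Eigenbasis

end

theorem stmt9_general (n : ℕ) [NeZero n] (hn : 3 ≤ n)
    (K : Set (EuclideanSpace ℝ (Fin n))) (hK : IsProperCone K)
    (A : Matrix (Fin n) (Fin n) ℝ) (hA : A.IsSymm)
    (v : Fin n → EuclideanSpace ℝ (Fin n)) (hv : Orthonormal ℝ v)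
    (lam : Fin n → ℝ) (heig : ∀ i, Matrix.toEuclideanLin A (v i) = lam i • v i)
    (hmono : Monotone lam)
    (hnc : ¬ ∀ x ∈ K, ∀ y ∈ K, ‖x‖ = 1 → ‖y‖ = 1 → quadForm A x = quadForm A y)
    (hconv : ∀ c : ℝ, Convex ℝ (sublevel A K c)) :
    lam 0 < lam 1 ∧
      ((∀ x ∈ K, ‖x‖ = 1 → lam 1 ≤ quadForm A x) ∨
        (∀ x ∈ K, ‖x‖ = 1 → quadForm A x ≤ lam 1)) := by
  obtain ⟨-, hKconv, -, -, hKint⟩ := hK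
  have h01 : (0 : Fin n) ≠ 1 := by
    rw [Ne, Fin.ext_iff, Fin.val_one', Nat.mod_eq_of_lt (by omega)]
    simp
  have hle : lam 0 ≤ lam 1 := hmono (Fin.zero_le 1)
  have upper (x : EuclideanSpace ℝ (Fin n)) (hx : x ∈ K) (hx1 : ‖x‖ = 1) :
      quadForm A x ≤ lam 1 := by
    simpa [hx1] using quadForm_le_of_forall_mem_interior hKconv hKint
      (fun y hy => quadForm_le_of_mem_interior hA hconv hv heig h01 hle hy) hx
  have lower (x : EuclideanSpace ℝ (Fin n)) (hx1 : ‖x‖ = 1) : lam 0 ≤ quadForm A x := by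
    simpa [hx1] using mul_norm_sq_le_quadForm hA hv (Fintype.card_fin n) heig
      (fun i => hmono (Fin.zero_le i)) x
  refine ⟨hle.lt_of_ne fun heq => hnc fun x hx y hy hx1 hy1 => ?_, Or.inr upper⟩
  linarith [upper x hx hx1, upper y hy hy1, lower x hx1, lower y hy1]

/-- Proposition 3 of the paper: if `A` is symmetric nonsingular, `q_A` is not constant
on `S^{n-1} ∩ K` and all sublevel sets `[φ_A ≤ c]` are convex, then `λ₁ < λ₂` and
either `λ₂ ≤ q_A` on `S^{n-1} ∩ K` or `q_A ≤ λ₂` on `S^{n-1} ∩ K`. -/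
theorem stmt9 (n : ℕ) [NeZero n] (hn : 3 ≤ n)
    (K : Set (EuclideanSpace ℝ (Fin n))) (hK : IsProperCone K) (hsub : K ⊆ dualCone K)
    (A : Matrix (Fin n) (Fin n) ℝ) (hA : A.IsSymm) (hdet : A.det ≠ 0)
    (v : Fin n → EuclideanSpace ℝ (Fin n)) (hv : Orthonormal ℝ v)
    (lam : Fin n → ℝ) (heig : ∀ i, Matrix.toEuclideanLin A (v i) = lam i • v i)
    (hmono : Monotone lam)
    (hnc : ¬ ∀ x ∈ K, ∀ y ∈ K, ‖x‖ = 1 → ‖y‖ = 1 → quadForm A x = quadForm A y)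
    (hconv : ∀ c : ℝ, Convex ℝ (sublevel A K c)) :
    lam 0 < lam 1 ∧
      ((∀ x ∈ K, ‖x‖ = 1 → lam 1 ≤ quadForm A x) ∨
        (∀ x ∈ K, ‖x‖ = 1 → quadForm A x ≤ lam 1)) :=
  stmt9_general n hn K hK A hA v hv lam heig hmono hnc hconv
end

section
/- Let n ≥ 3, let K ⊆ ℝⁿ be a proper subdual cone, let A ∈ ℝ^{n×n} be symmetric, and let {v¹, …, vⁿ} be an orthonormal system of eigenvectors of A with A vⁱ = λᵢ vⁱ and λ₁ < λ₂ ≤ ⋯ ≤ λₙ. Set θᵢ = (λᵢ − λ₂)/(λ₂ − λ₁) for i = 2, …, n, L_{λ₂} = {x ∈ ℝⁿ : ⟨v¹, x⟩ ≥ √(θ₂⟨v², x⟩² + ⋯ + θₙ⟨vⁿ, x⟩²)}, and W = (L_{λ₂} ∪ (−L_{λ₂})) ∩ int(K). Suppose that λ₂Iₙ − A is K-copositive. Then the sublevel set [φ_A ≤ c] = {x ∈ int(K) : ⟨Ax, x⟩ ≤ c‖x‖²} is convex for every c ∈ ℝ (equivalently, q_A is spherically quasi-convex) if and only if v¹ ∈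 W* ∪ (−W*), where W* is the dual cone of W. In particular, if v¹ ∈ K*, then [φ_A ≤ c] is convex for every c ∈ ℝ. -/
/-!
In an orthonormal eigenbasis `(vⁱ)` of `A`, `⟪Ax, x⟫ - c‖x‖² = ∑ᵢ (λᵢ - c)⟪vⁱ, x⟫²`, and
copositivity of `λ₂I - A` says that this is `≤ 0` on `K` for `c = λ₂`. That already puts `int K`
inside `L ∪ -L`, so `W = int K` and `W* = K*`.

If `±v¹ ∈ K*`, then for `λ₁ ≤ c < λ₂` the set `[φ_A ≤ c]` is `int K` cut by the second-order cone
`√(∑_{i ≥ 2} (λᵢ - c)⟪vⁱ, x⟫²) ≤ √(c - λ₁) ⟪±v¹, x⟫`; for other `c` it is `∅` or `int K`.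
Otherwise `K` meets both open sides of `v¹ᗮ`. Pushing interior points on either side away from
`v¹ᗮ` gives `⟪Ax, x⟫ < λ₂‖x‖²`, so both lie in some `[φ_A ≤ c]` with `c < λ₂`, whereas the point
of the segment between them on `v¹ᗮ` has `⟪Ax, x⟫ ≥ λ₂‖x‖²`.
-/

open scoped RealInnerProductSpace

open scoped Topology
open Set Filter

theorem ConvexOn.convex_setOf_le_inner {E : Type*} [NormedAddCommGroup E]
    [InnerProductSpace ℝ E] {f : E → ℝ} (hf : ConvexOn ℝ univ f) (u : E) :
    Convex ℝ {x | f x ≤ ⟪u, x⟫} := by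
  intro x hx y hy a c ha hc hac
  simp only [mem_ofPred_eq, inner_add_right, real_inner_smul_right] at hx hy ⊢
  calc f (a • x + c • y) ≤ a * f x + c * f y := hf.2 trivial trivial ha hc hac
    _ ≤ a * ⟪u, x⟫ + c * ⟪u, y⟫ := by gcongr

theorem zero_notMem_interior_of_inter_neg_subset {E : Type*} [NormedAddCommGroup E]
    [NormedSpace ℝ E] [Nontrivial E] {K : Set E} (hK : K ∩ -K ⊆ {0}) :
    (0 : E) ∉ interior K := by
  intro h
  rw [mem_interior_iff_mem_nhds] at h
  have h0 : ({0} : Set E) ∈ 𝓝 (0 : E) :=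
    mem_of_superset (inter_mem h (neg_mem_nhds_zero E h)) hK
  simpa [interior_singleton] using mem_interior_iff_mem_nhds.2 h0

theorem Convex.inter_interior_nonempty_of_isOpen {E : Type*} [NormedAddCommGroup E]
    [NormedSpace ℝ E]
    {K U : Set E} (hK : Convex ℝ K) (hKi : (interior K).Nonempty) (hU : IsOpen U)
    (hUK : (U ∩ K).Nonempty) : (U ∩ interior K).Nonempty := by
  obtain ⟨y, hyU, hyK⟩ := hUK
  have hy : y ∈ closure (interior K) := by
    rw [hK.closure_interior_eq_closure_of_nonempty_interior hKi]
    exact subset_closure hyK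
  exact mem_closure_iff.1 hy U hU hyU

namespace OrthonormalBasis

variable {ι E : Type*} [Fintype ι] [NormedAddCommGroup E] [InnerProductSpace ℝ E]
  (b : OrthonormalBasis ι ℝ E)

noncomputable def diagForm (w : ι → ℝ) (x : E) : ℝ := ∑ i, w i * ⟪b i, x⟫ ^ 2

theorem diagForm_sub_const (w : ι → ℝ) (c : ℝ) (x : E) :
    b.diagForm (fun i => w i - c) x = b.diagForm w x - c * ‖x‖ ^ 2 := by
  simp only [diagForm, sub_mul, Finset.sum_sub_distrib, ← Finset.mul_sum, b.sum_sq_inner_right]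

theorem inner_map_self_eq_diagForm {T : E →ₗ[ℝ] E} {w : ι → ℝ}
    (hT : ∀ i, T (b i) = w i • b i) (x : E) : ⟪T x, x⟫ = b.diagForm w x := by
  have hTx : T x = ∑ i, (w i * ⟪b i, x⟫) • b i := by
    conv_lhs => rw [← b.sum_repr' x]
    simp [hT, smul_smul, mul_comm]
  simp [hTx, sum_inner, real_inner_smul_left, diagForm, sq, mul_assoc]

theorem diagForm_pos {w : ι → ℝ} {x : E} (hx : x ≠ 0) (hw : ∀ i, ⟪b i, x⟫ ≠ 0 → 0 < w i) :
    0 < b.diagForm w x := by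
  obtain ⟨j, hj⟩ : ∃ j, ⟪b j, x⟫ ≠ 0 := by
    by_contra! h
    exact hx (by simpa [h] using (b.sum_repr' x).symm)
  have hterm : ∀ i, 0 ≤ w i * ⟪b i, x⟫ ^ 2 := fun i => by
    by_cases hi : ⟪b i, x⟫ = 0
    · simp [hi]
    · exact mul_nonneg (hw i hi).le (sq_nonneg _)
  exact Finset.sum_pos' (fun i _ => hterm i)
    ⟨j, Finset.mem_univ j, by have := hw j hj; positivity⟩

theorem convexOn_sqrt_diagForm {w : ι → ℝ} (hw : ∀ i, 0 ≤ w i) :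
    ConvexOn ℝ univ fun x => √(b.diagForm w x) := by
  let D : E →ₗ[ℝ] EuclideanSpace ℝ ι := (WithLp.linearEquiv 2 ℝ (ι → ℝ)).symm.toLinearMap ∘ₗ
    LinearMap.pi fun i => √(w i) • innerₛₗ ℝ (b i)
  have hD : (fun x => √(b.diagForm w x)) = norm ∘ D := by
    funext x
    simp [D, EuclideanSpace.norm_eq, diagForm, mul_pow, Real.sq_sqrt (hw _)]
  rw [hD]
  exact (convexOn_norm convex_univ).comp_linearMap D

section

variable [DecidableEq ι]

theorem diagForm_add_smul (w : ι → ℝ) (x : E) (j : ι) (t : ℝ) :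
    b.diagForm w (x + t • b j) = b.diagForm w x + w j * (2 * t * ⟪b j, x⟫ + t ^ 2) := by
  have hterm : ∀ i, w i * ⟪b i, x + t • b j⟫ ^ 2 =
      w i * ⟪b i, x⟫ ^ 2 + if i = j then w j * (2 * t * ⟪b j, x⟫ + t ^ 2) else 0 := fun i => by
    rw [inner_add_right, real_inner_smul_right, b.inner_eq_ite]
    split_ifs with h
    · subst h; ring
    · ring
  simp only [diagForm, hterm, Finset.sum_add_distrib, Finset.sum_ite_eq', Finset.mem_univ, if_true]

theorem diagForm_eq_add_update (w : ι → ℝ) (j : ι) (x : E) :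
    b.diagForm w x = w j * ⟪b j, x⟫ ^ 2 + b.diagForm (Function.update w j 0) x := by
  simp only [diagForm, ← Finset.add_sum_erase _ _ (Finset.mem_univ j), Function.update_self,
    zero_mul, zero_add]
  congr 1
  exact Finset.sum_congr rfl fun i hi => by rw [Function.update_of_ne (Finset.ne_of_mem_erase hi)]

end

/-- The sublevel set `{x ∈ int K | ⟪T x, x⟫ ≤ c ‖x‖²}` of the Rayleigh quotient of an operator
`T` with eigenbasis `b` and eigenvalues `lam` (see `inner_map_self_eq_diagForm`). -/
def rayleighSublevel (K : Set E) (lam : ι → ℝ) (c : ℝ) : Set E :=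
  {x ∈ interior K | b.diagForm (fun i => lam i - c) x ≤ 0}

variable {b} {K : Set E} {lam : ι → ℝ} {i₀ : ι} {μ : ℝ}

theorem rayleighSublevel_eq_interior (hcop : ∀ x ∈ K, b.diagForm (fun i => lam i - μ) x ≤ 0)
    {c : ℝ} (hc : μ ≤ c) : b.rayleighSublevel K lam c = interior K := by
  refine sep_eq_self_iff_mem_true.2 fun x hx => ?_
  have hx := hcop x (interior_subset hx)
  rw [diagForm_sub_const] at hx ⊢
  linarith [mul_le_mul_of_nonneg_right hc (sq_nonneg ‖x‖)]

theorem rayleighSublevel_eq_empty (h0 : (0 : E) ∉ interior K) {c : ℝ} (hc : ∀ i, c < lam i) :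
    b.rayleighSublevel K lam c = ∅ := by
  refine eq_empty_iff_forall_notMem.2 fun x hx => ?_
  have hx0 : x ≠ 0 := fun h => h0 (h ▸ hx.1)
  exact hx.2.not_gt (b.diagForm_pos hx0 fun i _ => sub_pos.2 (hc i))

/-- The sublevel sets just below `μ` contain `w₁` and `w₂` but miss the point of the segment
`[w₁, w₂]` on `b i₀ᗮ`, where the form is at least `μ ‖·‖²`. -/
theorem exists_not_convex_rayleighSublevel (h0 : (0 : E) ∉ interior K)
    (hμ : ∀ i ≠ i₀, μ ≤ lam i) {w₁ w₂ : E} (hw₁ : w₁ ∈ interior K) (hw₂ : w₂ ∈ interior K)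
    (h₁ : ⟪b i₀, w₁⟫ < 0) (h₂ : 0 < ⟪b i₀, w₂⟫)
    (hψ₁ : b.diagForm (fun i => lam i - μ) w₁ < 0)
    (hψ₂ : b.diagForm (fun i => lam i - μ) w₂ < 0) :
    ∃ c, ¬Convex ℝ (b.rayleighSublevel K lam c) := by
  have hnear : ∀ w, b.diagForm (fun i => lam i - μ) w < 0 →
      ∀ᶠ c in 𝓝 μ, b.diagForm (fun i => lam i - c) w < 0 := by
    intro w hw
    have hcont : Continuous fun c => b.diagForm (fun i => lam i - c) w := by
      simp only [diagForm_sub_const]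
      fun_prop
    exact hcont.continuousAt.eventually_lt continuousAt_const hw
  obtain ⟨c, ⟨hc₁, hc₂⟩, hc⟩ := ((((hnear _ hψ₁).and (hnear _ hψ₂)).filter_mono
    nhdsWithin_le_nhds).and (self_mem_nhdsWithin (s := Iio μ))).exists
  have hc : c < μ := hc
  refine ⟨c, fun hconv => ?_⟩
  set a₁ := ⟪b i₀, w₁⟫
  set a₂ := ⟪b i₀, w₂⟫
  have hd : 0 < a₂ - a₁ := by linarith
  set z := (a₂ / (a₂ - a₁)) • w₁ + (-a₁ / (a₂ - a₁)) • w₂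
  have hz : z ∈ b.rayleighSublevel K lam c :=
    hconv ⟨hw₁, hc₁.le⟩ ⟨hw₂, hc₂.le⟩ (div_nonneg h₂.le hd.le) (div_nonneg (by linarith) hd.le)
      (by field_simp; ring)
  have hz0 : ⟪b i₀, z⟫ = 0 := by
    simp only [z, inner_add_right, real_inner_smul_right]
    field_simp
    ring
  have hzne : z ≠ 0 := fun h => h0 (h ▸ hz.1)
  refine hz.2.not_gt (b.diagForm_pos hzne fun i hi => ?_)
  have hi₀ : i ≠ i₀ := by
    rintro rfl
    exact hi hz0
  linarith [hμ i hi₀]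

variable [DecidableEq ι]

theorem rayleighSublevel_eq_inter_setOf_sqrt_le {c : ℝ} (hc₀ : lam i₀ ≤ c) {u : E}
    (hu : u = b i₀ ∨ u = -b i₀) (huK : ∀ y ∈ K, 0 ≤ ⟪u, y⟫) :
    b.rayleighSublevel K lam c = interior K ∩
      {x | √(b.diagForm (Function.update (fun i => lam i - c) i₀ 0) x) ≤
        ⟪√(c - lam i₀) • u, x⟫} := by
  ext x
  simp only [rayleighSublevel, mem_inter_iff, mem_ofPred_eq]
  refine and_congr_right fun hx => ?_
  have hux : 0 ≤ ⟪u, x⟫ := huK x (interior_subset hx)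
  have hu2 : ⟪u, x⟫ ^ 2 = ⟪b i₀, x⟫ ^ 2 := by rcases hu with rfl | rfl <;> simp [inner_neg_left]
  rw [real_inner_smul_left, Real.sqrt_le_left (by positivity), mul_pow,
    Real.sq_sqrt (sub_nonneg.2 hc₀), hu2, b.diagForm_eq_add_update _ i₀]
  constructor <;> intro h <;> linarith

theorem convex_rayleighSublevel (hK : Convex ℝ K) (h0 : (0 : E) ∉ interior K)
    (hcop : ∀ x ∈ K, b.diagForm (fun i => lam i - μ) x ≤ 0) (hμ : ∀ i ≠ i₀, μ ≤ lam i)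
    {u : E} (hu : u = b i₀ ∨ u = -b i₀) (huK : ∀ y ∈ K, 0 ≤ ⟪u, y⟫) (c : ℝ) :
    Convex ℝ (b.rayleighSublevel K lam c) := by
  rcases le_or_gt μ c with hc | hc
  · rw [rayleighSublevel_eq_interior hcop hc]
    exact hK.interior
  rcases lt_or_ge c (lam i₀) with hc₀ | hc₀
  · have hc' (i : ι) : c < lam i := by
      rcases eq_or_ne i i₀ with rfl | hi
      exacts [hc₀, hc.trans_le (hμ i hi)]
    rw [rayleighSublevel_eq_empty h0 hc']
    exact convex_empty
  rw [rayleighSublevel_eq_inter_setOf_sqrt_le hc₀ hu huK]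
  refine hK.interior.inter ((b.convexOn_sqrt_diagForm fun i => ?_).convex_setOf_le_inner _)
  rcases eq_or_ne i i₀ with rfl | hi
  · simp
  · rw [Function.update_of_ne hi]
    linarith [hμ i hi]

/-- Pushing an interior point slightly further along `b i₀` makes the copositivity inequality
strict. -/
theorem exists_mem_interior_diagForm_neg (hK : Convex ℝ K) (hKi : (interior K).Nonempty)
    (hcop : ∀ x ∈ K, b.diagForm (fun i => lam i - μ) x ≤ 0) (hgap : lam i₀ < μ) {y : E}
    (hy : y ∈ K) (hy0 : ⟪b i₀, y⟫ ≠ 0) :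
    ∃ w ∈ interior K, 0 < ⟪b i₀, w⟫ * ⟪b i₀, y⟫ ∧ b.diagForm (fun i => lam i - μ) w < 0 := by
  obtain ⟨w₀, hw₀y, hw₀⟩ := hK.inter_interior_nonempty_of_isOpen hKi
    (U := {w | 0 < ⟪b i₀, w⟫ * ⟪b i₀, y⟫}) (isOpen_lt continuous_const (by fun_prop))
    ⟨y, mul_self_pos.2 hy0, hy⟩
  set a := ⟪b i₀, w₀⟫
  have ha : a ≠ 0 := left_ne_zero_of_mul (ne_of_gt hw₀y)
  have hnear : ∀ᶠ δ in 𝓝 (0 : ℝ), w₀ + (δ * a) • b i₀ ∈ interior K := by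
    have hcont : Continuous fun δ : ℝ => w₀ + (δ * a) • b i₀ := by fun_prop
    exact hcont.continuousAt.preimage_mem_nhds (by simpa using isOpen_interior.mem_nhds hw₀)
  obtain ⟨δ, hδK, hδ⟩ :=
    ((hnear.filter_mono nhdsWithin_le_nhds).and (self_mem_nhdsWithin (s := Ioi 0))).exists
  have hδ : 0 < δ := hδ
  refine ⟨_, hδK, ?_, ?_⟩
  · rw [inner_add_right, real_inner_smul_right, b.inner_eq_one]
    have : 0 < (1 + δ) * (a * ⟪b i₀, y⟫) := mul_pos (by linarith) hw₀y
    linarith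
  · rw [diagForm_add_smul]
    have hψ := hcop w₀ (interior_subset hw₀)
    have : 0 < (μ - lam i₀) * ((2 * δ + δ ^ 2) * a ^ 2) := by
      have := sub_pos.2 hgap
      positivity
    nlinarith

theorem inner_nonneg_or_neg_inner_nonneg_of_forall_convex (hK : Convex ℝ K)
    (hKi : (interior K).Nonempty) (h0 : (0 : E) ∉ interior K)
    (hcop : ∀ x ∈ K, b.diagForm (fun i => lam i - μ) x ≤ 0) (hgap : lam i₀ < μ)
    (hμ : ∀ i ≠ i₀, μ ≤ lam i) (hconv : ∀ c, Convex ℝ (b.rayleighSublevel K lam c)) :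
    (∀ y ∈ K, 0 ≤ ⟪b i₀, y⟫) ∨ ∀ y ∈ K, 0 ≤ ⟪-b i₀, y⟫ := by
  by_contra! h
  obtain ⟨⟨y₁, hy₁, h₁⟩, ⟨y₂, hy₂, h₂⟩⟩ := h
  rw [inner_neg_left, neg_lt_zero] at h₂
  obtain ⟨w₁, hw₁, hs₁, hψ₁⟩ := exists_mem_interior_diagForm_neg hK hKi hcop hgap hy₁ h₁.ne
  obtain ⟨w₂, hw₂, hs₂, hψ₂⟩ := exists_mem_interior_diagForm_neg hK hKi hcop hgap hy₂ h₂.ne'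
  obtain ⟨c, hc⟩ := exists_not_convex_rayleighSublevel h0 hμ hw₁ hw₂
    ((neg_iff_neg_of_mul_pos hs₁).2 h₁) ((pos_iff_pos_of_mul_pos hs₂).2 h₂) hψ₁ hψ₂
  exact hc (hconv c)

end OrthonormalBasis

open OrthonormalBasis

theorem mem_ellipCone_union_neg_iff {n : ℕ} [NeZero n] (v : Fin n → EuclideanSpace ℝ (Fin n))
    (θ : Fin n → ℝ) (x : EuclideanSpace ℝ (Fin n)) :
    x ∈ ellipCone v θ ∪ -ellipCone v θ ↔
      ∑ i ∈ Finset.univ.erase 0, θ i * ⟪v i, x⟫ ^ 2 ≤ ⟪v 0, x⟫ ^ 2 := by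
  simp only [mem_union, Set.mem_neg, ellipCone, mem_ofPred_eq, inner_neg_right, neg_sq,
    Real.sqrt_le_iff]
  constructor
  · rintro (⟨-, h⟩ | ⟨-, h⟩) <;> simpa using h
  · intro h
    rcases le_total 0 ⟪v 0, x⟫ with h0 | h0
    · exact .inl ⟨h0, h⟩
    · exact .inr ⟨by linarith, by simpa using h⟩

theorem mem_ellipCone_union_neg_of_diagForm_nonpos {n : ℕ} [NeZero n]
    (b : OrthonormalBasis (Fin n) ℝ (EuclideanSpace ℝ (Fin n))) {lam : Fin n → ℝ} {μ : ℝ}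
    (hgap : lam 0 < μ) {x : EuclideanSpace ℝ (Fin n)}
    (hx : b.diagForm (fun i => lam i - μ) x ≤ 0) :
    x ∈ ellipCone b (fun i => (lam i - μ) / (μ - lam 0)) ∪
      -ellipCone b (fun i => (lam i - μ) / (μ - lam 0)) := by
  rw [mem_ellipCone_union_neg_iff]
  rw [diagForm, ← Finset.add_sum_erase _ _ (Finset.mem_univ 0)] at hx
  simp_rw [div_mul_eq_mul_div, ← Finset.sum_div]
  rw [div_le_iff₀ (sub_pos.2 hgap)]
  linarith

theorem quadForm_smul_one_sub {n : ℕ} (A : Matrix (Fin n) (Fin n) ℝ) (μ : ℝ)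
    (x : EuclideanSpace ℝ (Fin n)) :
    quadForm (μ • (1 : Matrix (Fin n) (Fin n) ℝ) - A) x = μ * ‖x‖ ^ 2 - quadForm A x := by
  simp only [quadForm, map_sub, map_smul, Matrix.toLpLin_one, LinearMap.sub_apply,
    LinearMap.smul_apply, LinearMap.id_apply, inner_sub_left, real_inner_smul_left,
    real_inner_self_eq_norm_sq]

theorem dualCone_interior {n : ℕ} {K : Set (EuclideanSpace ℝ (Fin n))} (hK : Convex ℝ K)
    (hKi : (interior K).Nonempty) : dualCone (interior K) = dualCone K := by
  refine Subset.antisymm (fun u hu y hy => ?_) fun u hu y hy => hu y (interior_subset hy)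
  have hcl : closure (interior K) ⊆ {z | 0 ≤ ⟪u, z⟫} :=
    closure_minimal hu (isClosed_le continuous_const (by fun_prop))
  rw [hK.closure_interior_eq_closure_of_nonempty_interior hKi] at hcl
  exact hcl (subset_closure hy)

theorem stmt11_general (n : ℕ) [NeZero n]
    (K : Set (EuclideanSpace ℝ (Fin n))) (hK : IsProperCone K)
    (A : Matrix (Fin n) (Fin n) ℝ)
    (v : Fin n → EuclideanSpace ℝ (Fin n)) (hv : Orthonormal ℝ v)
    (lam : Fin n → ℝ) (heig : ∀ i, Matrix.toEuclideanLin A (v i) = lam i • v i)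
    (hmono : Monotone lam) (h12 : lam 0 < lam 1)
    (hcop : ∀ x ∈ K, 0 ≤ quadForm (lam 1 • (1 : Matrix (Fin n) (Fin n) ℝ) - A) x) :
    let L := ellipCone v (fun i => (lam i - lam 1) / (lam 1 - lam 0))
    let W := (L ∪ -L) ∩ interior K
    ((∀ c : ℝ, Convex ℝ (sublevel A K c)) ↔ v 0 ∈ dualCone W ∪ -dualCone W) ∧
      (v 0 ∈ dualCone K → ∀ c : ℝ, Convex ℝ (sublevel A K c)) := by
  intro L W
  obtain ⟨-, hKc, -, hpt, hKi⟩ := hK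
  obtain ⟨b, rfl⟩ : ∃ b : OrthonormalBasis (Fin n) ℝ (EuclideanSpace ℝ (Fin n)), ⇑b = v :=
    ⟨.mk hv (hv.linearIndependent.span_eq_top_of_card_eq_finrank' (by simp)).ge,
      OrthonormalBasis.coe_mk _ _⟩
  have hquad (x) : quadForm A x = b.diagForm lam x := b.inner_map_self_eq_diagForm heig x
  have hsublevel (c) : sublevel A K c = b.rayleighSublevel K lam c := by
    simp only [sublevel, rayleighSublevel, hquad, diagForm_sub_const, sub_nonpos]
  have hnonpos (x) (hx : x ∈ K) : b.diagForm (fun i => lam i - lam 1) x ≤ 0 := by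
    have h := hcop x hx
    rw [quadForm_smul_one_sub, hquad] at h
    rw [diagForm_sub_const]
    linarith
  have hμ (i) (hi : i ≠ 0) : lam 1 ≤ lam i := hmono (Fin.one_le_of_ne_zero hi)
  have h0 := zero_notMem_interior_of_inter_neg_subset hpt
  have hW : W = interior K := inter_eq_right.2 fun x hx =>
    mem_ellipCone_union_neg_of_diagForm_nonpos b h12 (hnonpos x (interior_subset hx))
  have hback (u) (hu : u = b 0 ∨ u = -b 0) (huK : u ∈ dualCone K) (c : ℝ) :
      Convex ℝ (sublevel A K c) :=
    hsublevel c ▸ convex_rayleighSublevel hKc h0 hnonpos hμ hu huK c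
  rw [hW, dualCone_interior hKc hKi]
  refine ⟨⟨fun hconv => ?_, ?_⟩, hback _ (.inl rfl)⟩
  · exact inner_nonneg_or_neg_inner_nonneg_of_forall_convex hKc hKi h0 hnonpos h12 hμ
      fun c => hsublevel c ▸ hconv c
  · rintro (h | h)
    exacts [hback _ (.inl rfl) h, hback _ (.inr rfl) h]

/-- Theorem 1(iii) of the paper: if `λ₂Iₙ - A` is `K`-copositive, then all sublevel
sets `[φ_A ≤ c]` are convex (i.e. `q_A` is spherically quasi-convex) iff
`v¹ ∈ W* ∪ (-W*)`; in particular `v¹ ∈ K*` suffices. -/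
theorem stmt11 (n : ℕ) [NeZero n] (hn : 3 ≤ n)
    (K : Set (EuclideanSpace ℝ (Fin n))) (hK : IsProperCone K) (hsub : K ⊆ dualCone K)
    (A : Matrix (Fin n) (Fin n) ℝ) (hA : A.IsSymm)
    (v : Fin n → EuclideanSpace ℝ (Fin n)) (hv : Orthonormal ℝ v)
    (lam : Fin n → ℝ) (heig : ∀ i, Matrix.toEuclideanLin A (v i) = lam i • v i)
    (hmono : Monotone lam) (h12 : lam 0 < lam 1)
    (hcop : ∀ x ∈ K, 0 ≤ quadForm (lam 1 • (1 : Matrix (Fin n) (Fin n) ℝ) - A) x) :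
    let L := ellipCone v (fun i => (lam i - lam 1) / (lam 1 - lam 0))
    let W := (L ∪ -L) ∩ interior K
    ((∀ c : ℝ, Convex ℝ (sublevel A K c)) ↔ v 0 ∈ dualCone W ∪ -dualCone W) ∧
      (v 0 ∈ dualCone K → ∀ c : ℝ, Convex ℝ (sublevel A K c)) :=
  stmt11_general n K hK A v hv lam heig hmono h12 hcop
end
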